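/- Let K = {(x,y,z) ∈ ℝ³ : x² + y² ≤ 1, |z| ≤ 1} be the origin-symmetric solid cylinder of height 2 and radius 1, and let L be the closed unit ball of ℝ³. Then r_o(K,L) = 1, R_o(K,L) = √2, and K is in the class ℜ₁ with respect to L: with W₀ = 2π, W₁ = 2π, W₂ = π(π+2)/3 the relative quermassintegrals of K with respect to L, one has B₀(r) = 4π r − 2π − (π(π+2)/3) r² ≥ 0 for all r ∈ [1, √2]. -/

import Mathlib

/-!
On the unit sphere the support function of the unit ball is `1`, while that of the cylinder is
`a + b` with `a = √(u₀² + u₁²)` and `b = |u₂|`, so `a² + b² = 1`; hence the ratio ranges over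
`[1, √2]`, with `1` attained at the pole and `√2` at `a = b = √2/2`. The quadratic `B₀` is concave
in `r`, so it suffices that it is positive at the endpoints, where it equals `π(4 - π)/3` and
`π(12√2 - 10 - 2π)/3`.
-/

open scoped Pointwise RealInnerProductSpace
open MeasureTheory Metric

noncomputable section

/-- The support function `h_K(u) = sup_{x ∈ K} ⟨x, u⟩` of a set `K ⊆ ℝ³`. -/
def supp (K : Set (EuclideanSpace ℝ (Fin 3))) (u : EuclideanSpace ℝ (Fin 3)) : ℝ :=
  sSup ((fun x => ⟪x, u⟫) '' K)

/-- `r_o(K,L) = min_{u ∈ S²} h_K(u)/h_L(u)`. -/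
def rIn (K L : Set (EuclideanSpace ℝ (Fin 3))) : ℝ :=
  sInf ((fun u => supp K u / supp L u) '' sphere (0 : EuclideanSpace ℝ (Fin 3)) 1)

/-- `R_o(K,L) = max_{u ∈ S²} h_K(u)/h_L(u)`. -/
def rOut (K L : Set (EuclideanSpace ℝ (Fin 3))) : ℝ :=
  sSup ((fun u => supp K u / supp L u) '' sphere (0 : EuclideanSpace ℝ (Fin 3)) 1)

open Real

theorem isGreatest_inner_image_closedBall {F : Type*} [NormedAddCommGroup F]
    [InnerProductSpace ℝ F] (u : F) :
    IsGreatest ((fun x => ⟪x, u⟫) '' closedBall (0 : F) 1) ‖u‖ := by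
  refine ⟨⟨‖u‖⁻¹ • u, ?_, ?_⟩, ?_⟩
  · rw [mem_closedBall_zero_iff, norm_smul, norm_inv, norm_norm, ← div_eq_inv_mul]
    exact div_self_le_one _
  · change ⟪‖u‖⁻¹ • u, u⟫ = ‖u‖
    rw [real_inner_smul_left, real_inner_self_eq_norm_sq, sq, ← mul_assoc, inv_mul_mul_self]
  · rintro _ ⟨x, hx, rfl⟩
    calc ⟪x, u⟫ ≤ ‖x‖ * ‖u‖ := real_inner_le_norm x u
      _ ≤ 1 * ‖u‖ := by gcongr; exact mem_closedBall_zero_iff.mp hx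
      _ = ‖u‖ := one_mul _

theorem one_le_add_of_sq_add_sq_eq_one {a b : ℝ} (ha : 0 ≤ a) (hb : 0 ≤ b)
    (h : a ^ 2 + b ^ 2 = 1) : 1 ≤ a + b := by
  nlinarith [mul_nonneg ha hb]

theorem add_le_sqrt_two_of_sq_add_sq_eq_one {a b : ℝ} (h : a ^ 2 + b ^ 2 = 1) :
    a + b ≤ √2 :=
  (le_abs_self _).trans <| Real.abs_le_sqrt <| by nlinarith [sq_nonneg (a - b)]

theorem quadratic_nonneg_of_mem_Icc_of_endpoints {α β γ a b r : ℝ} (hα : α ≤ 0)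
    (hr : r ∈ Set.Icc a b) (ha : 0 ≤ α * a ^ 2 + β * a + γ) (hb : 0 ≤ α * b ^ 2 + β * b + γ) :
    0 ≤ α * r ^ 2 + β * r + γ := by
  obtain ⟨har, hrb⟩ := hr
  rcases eq_or_lt_of_le (har.trans hrb) with rfl | hab
  · rwa [le_antisymm hrb har]
  refine nonneg_of_mul_nonneg_right ?_ (sub_pos.2 hab)
  -- Lagrange interpolation at `a` and `b`, plus the concave correction term.
  have hinterp : (b - a) * (α * r ^ 2 + β * r + γ) =
      -α * (b - a) * ((r - a) * (b - r)) + (b - r) * (α * a ^ 2 + β * a + γ) +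
        (r - a) * (α * b ^ 2 + β * b + γ) := by
    ring
  have hra := sub_nonneg.2 har
  have hbr := sub_nonneg.2 hrb
  rw [hinterp]
  exact add_nonneg (add_nonneg
    (mul_nonneg (mul_nonneg (neg_nonneg.2 hα) (sub_pos.2 hab).le) (mul_nonneg hra hbr))
    (mul_nonneg hbr ha)) (mul_nonneg hra hb)

theorem cylinder_ball_B0_nonneg {r : ℝ} (hr : r ∈ Set.Icc (1 : ℝ) √2) :
    4 * π * r - 2 * π - (π * (π + 2) / 3) * r ^ 2 ≥ 0 := by
  have hleft : 0 ≤ -(π + 2) * 1 ^ 2 + 12 * 1 + -6 := by linarith [Real.pi_lt_four]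
  have hright : 0 ≤ -(π + 2) * √2 ^ 2 + 12 * √2 + -6 := by
    have : (1.414 : ℝ) < √2 := by rw [Real.lt_sqrt (by norm_num)]; norm_num
    rw [Real.sq_sqrt zero_le_two]
    linarith [Real.pi_lt_d2]
  have hquad := quadratic_nonneg_of_mem_Icc_of_endpoints (by linarith [Real.pi_pos]) hr hleft hright
  have hfactor : 4 * π * r - 2 * π - (π * (π + 2) / 3) * r ^ 2 =
      π / 3 * (-(π + 2) * r ^ 2 + 12 * r + -6) := by
    ring
  rw [hfactor]
  exact mul_nonneg (by positivity) hquad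

section SolidCylinder

local notation "E" => EuclideanSpace ℝ (Fin 3)

def solidCylinder : Set E := {x | x 0 ^ 2 + x 1 ^ 2 ≤ 1 ∧ |x 2| ≤ 1}

theorem real_inner_eq_fin_three (x u : E) : ⟪x, u⟫ = x 0 * u 0 + x 1 * u 1 + x 2 * u 2 := by
  rw [PiLp.inner_apply, Fin.sum_univ_three]
  simp only [RCLike.inner_apply, conj_trivial]
  ring

theorem mem_unitSphere_iff_fin_three (u : E) :
    u ∈ sphere (0 : E) 1 ↔ u 0 ^ 2 + u 1 ^ 2 + u 2 ^ 2 = 1 := by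
  rw [mem_sphere_zero_iff_norm, ← pow_eq_one_iff_of_nonneg (norm_nonneg u) two_ne_zero,
    EuclideanSpace.real_norm_sq_eq, Fin.sum_univ_three]

-- The maximiser normalises the horizontal and the vertical component of `u` separately;
-- division by zero makes this correct also when one of them vanishes.
theorem isGreatest_inner_image_solidCylinder (u : E) :
    IsGreatest ((fun x => ⟪x, u⟫) '' solidCylinder) (√(u 0 ^ 2 + u 1 ^ 2) + |u 2|) := by
  set s := √(u 0 ^ 2 + u 1 ^ 2)
  have hs : s ^ 2 = u 0 ^ 2 + u 1 ^ 2 := Real.sq_sqrt (by positivity)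
  refine ⟨⟨!₂[u 0 / s, u 1 / s, u 2 / |u 2|], ⟨?_, ?_⟩, ?_⟩, ?_⟩
  · change (u 0 / s) ^ 2 + (u 1 / s) ^ 2 ≤ 1
    rw [div_pow, div_pow, ← add_div, ← hs]
    exact div_self_le_one _
  · change |(u 2 / |u 2|)| ≤ 1
    rw [abs_div, abs_abs]
    exact div_self_le_one _
  · change ⟪!₂[u 0 / s, u 1 / s, u 2 / |u 2|], u⟫ = s + |u 2|
    rw [real_inner_eq_fin_three]
    change u 0 / s * u 0 + u 1 / s * u 1 + u 2 / |u 2| * u 2 = s + |u 2|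
    have horizontal : u 0 / s * u 0 + u 1 / s * u 1 = s := by
      rw [div_mul_eq_mul_div, div_mul_eq_mul_div, ← add_div, ← sq, ← sq, ← hs, sq,
        mul_self_div_self]
    have vertical : u 2 / |u 2| * u 2 = |u 2| := by
      rw [div_mul_eq_mul_div, ← sq, ← sq_abs, sq, mul_self_div_self]
    rw [horizontal, vertical]
  · rintro _ ⟨x, ⟨hx, hx2⟩, rfl⟩
    change ⟪x, u⟫ ≤ s + |u 2|
    have horizontal : x 0 * u 0 + x 1 * u 1 ≤ s :=
      (le_abs_self _).trans <| Real.abs_le_sqrt <| by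
        nlinarith [sq_nonneg (x 0 * u 1 - x 1 * u 0), sq_nonneg (u 0), sq_nonneg (u 1)]
    have vertical : x 2 * u 2 ≤ |u 2| :=
      calc x 2 * u 2 ≤ |x 2| * |u 2| := by rw [← abs_mul]; exact le_abs_self _
        _ ≤ |u 2| := mul_le_of_le_one_left (abs_nonneg _) hx2
    rw [real_inner_eq_fin_three]
    linarith

theorem supp_solidCylinder (u : E) : supp solidCylinder u = √(u 0 ^ 2 + u 1 ^ 2) + |u 2| :=
  (isGreatest_inner_image_solidCylinder u).csSup_eq

theorem supp_closedBall (u : E) : supp (closedBall 0 1) u = ‖u‖ :=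
  (isGreatest_inner_image_closedBall u).csSup_eq

theorem supp_div_supp_of_mem_sphere {u : E} (hu : u ∈ sphere (0 : E) 1) :
    supp solidCylinder u / supp (closedBall 0 1) u = √(u 0 ^ 2 + u 1 ^ 2) + |u 2| := by
  rw [supp_solidCylinder, supp_closedBall, mem_sphere_zero_iff_norm.mp hu, div_one]

theorem sq_sqrt_add_sq_abs_of_mem_sphere {u : E} (hu : u ∈ sphere (0 : E) 1) :
    √(u 0 ^ 2 + u 1 ^ 2) ^ 2 + |u 2| ^ 2 = 1 := by
  rw [Real.sq_sqrt (by positivity), sq_abs, ← (mem_unitSphere_iff_fin_three u).mp hu]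

theorem image_supp_div_supp_eq :
    (fun u => supp solidCylinder u / supp (closedBall 0 1) u) '' sphere (0 : E) 1 =
      (fun u : E => √(u 0 ^ 2 + u 1 ^ 2) + |u 2|) '' sphere (0 : E) 1 :=
  Set.image_congr fun _ hu => supp_div_supp_of_mem_sphere hu

theorem rIn_solidCylinder_closedBall : rIn solidCylinder (closedBall 0 1) = 1 := by
  rw [rIn, image_supp_div_supp_eq]
  have hu : !₂[0, 0, 1] ∈ sphere (0 : E) 1 := (mem_unitSphere_iff_fin_three _).mpr (by simp)
  refine IsLeast.csInf_eq ⟨⟨_, hu, by simp⟩, ?_⟩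
  rintro _ ⟨u, hu, rfl⟩
  exact one_le_add_of_sq_add_sq_eq_one (Real.sqrt_nonneg _) (abs_nonneg _)
    (sq_sqrt_add_sq_abs_of_mem_sphere hu)

theorem rOut_solidCylinder_closedBall : rOut solidCylinder (closedBall 0 1) = √2 := by
  have hc : 0 ≤ √2 / 2 := by positivity
  have hc2 : (√2 / 2) ^ 2 = 1 / 2 := by rw [div_pow, Real.sq_sqrt zero_le_two]; norm_num
  have hu : !₂[√2 / 2, 0, √2 / 2] ∈ sphere (0 : E) 1 := by
    rw [mem_unitSphere_iff_fin_three]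
    change (√2 / 2) ^ 2 + 0 ^ 2 + (√2 / 2) ^ 2 = 1
    rw [hc2]
    norm_num
  have hratio : √((√2 / 2) ^ 2 + 0 ^ 2) + |√2 / 2| = √2 := by
    rw [zero_pow two_ne_zero, add_zero, Real.sqrt_sq hc, abs_of_nonneg hc]
    ring
  rw [rOut, image_supp_div_supp_eq]
  refine IsGreatest.csSup_eq ⟨⟨_, hu, hratio⟩, ?_⟩
  rintro _ ⟨u, hu, rfl⟩
  exact add_le_sqrt_two_of_sq_add_sq_eq_one (sq_sqrt_add_sq_abs_of_mem_sphere hu)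

end SolidCylinder

/-- For the solid cylinder `K = {x² + y² ≤ 1, |z| ≤ 1}` and the closed unit ball
`L` in `ℝ³`, one has `r_o(K,L) = 1`, `R_o(K,L) = √2`, and `K` is in the class `ℜ₁` with
respect to `L`: with `W₀ = 2π`, `W₁ = 2π`, `W₂ = π(π+2)/3` the relative quermassintegrals of
`K` with respect to `L`, `B₀(r) = 4πr − 2π − (π(π+2)/3) r² ≥ 0` for all `r ∈ [1, √2]`. -/
theorem cylinder_in_class_R1_wrt_ball
    (K L : Set (EuclideanSpace ℝ (Fin 3)))
    (hK : K = {x : EuclideanSpace ℝ (Fin 3) | (x 0) ^ 2 + (x 1) ^ 2 ≤ 1 ∧ |x 2| ≤ 1})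
    (hL : L = closedBall (0 : EuclideanSpace ℝ (Fin 3)) 1) :
    rIn K L = 1 ∧ rOut K L = Real.sqrt 2 ∧
      ∀ r ∈ Set.Icc (1 : ℝ) (Real.sqrt 2),
        4 * π * r - 2 * π - (π * (π + 2) / 3) * r ^ 2 ≥ 0 := by
  subst hK hL
  exact ⟨rIn_solidCylinder_closedBall, rOut_solidCylinder_closedBall,
    fun _ => cylinder_ball_B0_nonneg⟩
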